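/- Let 𝒜 be a unital C*-algebra and (V, V⁺, e) an AOU 𝒜-space. Suppose (Q_n)_{n∈ℕ} is an operator 𝒜-system structure on V with Q_1 = V⁺ such that, for every operator 𝒜-system S, every positive 𝒜-bimodule map φ: (V, (Q_n), e) → S is completely positive. Then Q_n = C_n^{max}(V;𝒜) for every n ∈ ℕ; that is, the identity map of V is a unital 𝒜-bimodule complete order isomorphism from (V, (Q_n), e) onto omax_𝒜(V) := (V, (C_n^{max}(V;𝒜)), e). -/

import Mathlib

open Matrix

noncomputable section

/-- An AOU `𝒜`-space: an Archimedean order unit *-vector space `(V, pos, e)` which is an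
`A`-bimodule (actions `l`, `r`) satisfying `(a·x)* = x*·a*`, `a·e = e·a` and
`a*·x·a ∈ V⁺` for `x ∈ V⁺`. -/
structure AOUPack (A V : Type*) [Ring A] [StarRing A] [Algebra ℂ A]
    [AddCommGroup V] [Module ℂ V] [StarAddMonoid V] [StarModule ℂ V] where
  /-- the left action `a · x` -/
  l : A → V → V
  /-- the right action `x · a` -/
  r : V → A → V
  /-- the cone `V⁺` of positive elements -/
  pos : Set V
  /-- the Archimedean order unit -/
  e : V
  l_add : ∀ a b x, l (a + b) x = l a x + l b x
  add_l : ∀ a x y, l a (x + y) = l a x + l a y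
  smul_l : ∀ (c : ℂ) a x, l (c • a) x = c • l a x
  l_smul : ∀ (c : ℂ) a x, l a (c • x) = c • l a x
  r_add : ∀ x y a, r (x + y) a = r x a + r y a
  add_r : ∀ x a b, r x (a + b) = r x a + r x b
  smul_r : ∀ (c : ℂ) x a, r (c • x) a = c • r x a
  r_smul : ∀ (c : ℂ) x a, r x (c • a) = c • r x a
  mul_l : ∀ a b x, l (a * b) x = l a (l b x)
  mul_r : ∀ x a b, r x (a * b) = r (r x a) b
  l_r_assoc : ∀ a x b, r (l a x) b = l a (r x b)
  one_l : ∀ x, l 1 x = x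
  star_l : ∀ a x, star (l a x) = r (star x) (star a)
  pos_isSelfAdjoint : ∀ x ∈ pos, star x = x
  pos_add_mem : ∀ x ∈ pos, ∀ y ∈ pos, x + y ∈ pos
  pos_smul_mem : ∀ (t : ℝ), 0 ≤ t → ∀ x ∈ pos, (t : ℂ) • x ∈ pos
  pos_nonempty : pos.Nonempty
  pos_salient : ∀ x ∈ pos, -x ∈ pos → x = 0
  e_isSelfAdjoint : star e = e
  e_orderUnit : ∀ x, star x = x → ∃ t : ℝ, 0 < t ∧ (t : ℂ) • e - x ∈ pos
  e_arch : ∀ x, (∀ t : ℝ, 0 < t → x + (t : ℂ) • e ∈ pos) → x ∈ pos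
  e_comm : ∀ a, l a e = r e a
  conj_mem : ∀ a, ∀ x ∈ pos, r (l (star a) x) a ∈ pos

namespace AOUPack

variable {A V : Type*} [Ring A] [StarRing A] [Algebra ℂ A]
  [AddCommGroup V] [Module ℂ V] [StarAddMonoid V] [StarModule ℂ V]

variable (P : AOUPack A V)

/-- The action of a matrix over `A` on a matrix over `V` from the left:
`(M · X)_{ij} = Σ_p M_{ip} · X_{pj}`. -/
def amul {k m n : ℕ} (M : Matrix (Fin k) (Fin m) A) (X : Matrix (Fin m) (Fin n) V) :
    Matrix (Fin k) (Fin n) V :=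
  Matrix.of fun i j => ∑ p, P.l (M i p) (X p j)

/-- The action of a matrix over `A` on a matrix over `V` from the right:
`(X · N)_{ij} = Σ_p X_{ip} · N_{pj}`. -/
def vmul {m n l : ℕ} (X : Matrix (Fin m) (Fin n) V) (N : Matrix (Fin n) (Fin l) A) :
    Matrix (Fin m) (Fin l) V :=
  Matrix.of fun i j => ∑ p, P.r (X i p) (N p j)

/-- The congruence `M* · X · M` of `X ∈ M_m(V)` by `M ∈ M_{m,n}(A)`. -/
def conj {m n : ℕ} (M : Matrix (Fin m) (Fin n) A) (X : Matrix (Fin m) (Fin m) V) :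
    Matrix (Fin n) (Fin n) V :=
  P.vmul (P.amul Mᴴ X) M

/-- The diagonal matrix `e_n ∈ M_n(V)` with all diagonal entries equal to `e`. -/
def matE (n : ℕ) : Matrix (Fin n) (Fin n) V := Matrix.diagonal fun _ => P.e

/-- `C_n^{min}(V; A)`: hermitian `X ∈ M_n(V)` with `C* · X · C ∈ V⁺` for every
column `C ∈ M_{n,1}(A)`. -/
def Cmin (n : ℕ) : Set (Matrix (Fin n) (Fin n) V) :=
  {X | Xᴴ = X ∧ ∀ C : Matrix (Fin n) (Fin 1) A, P.conj C X 0 0 ∈ P.pos}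

/-- `D_n^{max}(V; A)`: finite sums `Σ_i A_i* · x_i · A_i` with `x_i ∈ V⁺` and
`A_i ∈ M_{1,n}(A)`. -/
def Dmax (n : ℕ) : Set (Matrix (Fin n) (Fin n) V) :=
  {X | ∃ (k : ℕ) (x : Fin k → V) (a : Fin k → Matrix (Fin 1) (Fin n) A),
    (∀ i, x i ∈ P.pos) ∧ X = ∑ i, P.conj (a i) (Matrix.of fun _ _ => x i)}

/-- `C_n^{max}(V; A) = {X : X + r e_n ∈ D_n^{max}(V; A) for all r > 0}`. -/
def Cmax (n : ℕ) : Set (Matrix (Fin n) (Fin n) V) :=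
  {X | ∀ t : ℝ, 0 < t → X + (t : ℂ) • P.matE n ∈ P.Dmax n}

/-- `Q` is an operator `A`-system structure on `V`: an `A`-compatible matrix ordering
with `Q 1 = V⁺` such that `e_n` is an Archimedean order unit for `Q n` for every `n`. -/
structure IsOperatorSystemStructure (Q : ∀ n : ℕ, Set (Matrix (Fin n) (Fin n) V)) : Prop where
  herm : ∀ n, ∀ X ∈ Q n, Xᴴ = X
  add_mem : ∀ n, ∀ X ∈ Q n, ∀ Y ∈ Q n, X + Y ∈ Q n
  smul_mem : ∀ n (t : ℝ), 0 ≤ t → ∀ X ∈ Q n, (t : ℂ) • X ∈ Q n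
  nonempty : ∀ n, (Q n).Nonempty
  salient : ∀ n, ∀ X ∈ Q n, -X ∈ Q n → X = 0
  compat : ∀ m n (X : Matrix (Fin m) (Fin m) V) (M : Matrix (Fin m) (Fin n) A),
    X ∈ Q m → P.conj M X ∈ Q n
  level_one : ∀ X : Matrix (Fin 1) (Fin 1) V, X ∈ Q 1 ↔ X 0 0 ∈ P.pos
  orderUnit : ∀ n (X : Matrix (Fin n) (Fin n) V), Xᴴ = X →
    ∃ t : ℝ, 0 < t ∧ (t : ℂ) • P.matE n - X ∈ Q n
  arch : ∀ n (X : Matrix (Fin n) (Fin n) V),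
    (∀ t : ℝ, 0 < t → X + (t : ℂ) • P.matE n ∈ Q n) → X ∈ Q n

end AOUPack

/-!
Every element of `D_n^max` is a sum of congruences `a* · x · a` of positive elements of `V`, so
it lies in `Q_n` by `𝒜`-compatibility, and the Archimedean property of `Q_n` then gives
`C_n^max ⊆ Q_n`. Conversely `C^max` is itself an operator `𝒜`-system structure on `V` (salience
is inherited from `Q`), so the universal property, applied to the identity of `V` viewed as a map
into `omax_𝒜(V)`, gives `Q_n ⊆ C_n^max`.

The substantial point is that `e_n` is an order unit for `D^max`. A hermitian `X` is half of
`Σ_{i,j} (E_ij ⊗ x_ij + E_ji ⊗ x_ij*)`; polarization over the fourth roots of unity writes each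
summand as a combination of rank-one matrices `c* c ⊗ y` with `y` hermitian; and if `y ≤ r e`
then `c* c ⊗ y ≤ r ‖c‖² e_n`, by Lagrange's identity
`‖c‖² I - c* c = ½ Σ_{k,l} d_kl* d_kl` with `d_kl = c̄_l δ_k - c̄_k δ_l`.
-/

namespace AOUPack

section Bimodule

variable {A V : Type*} [Ring A] [StarRing A] [Algebra ℂ A]
  [AddCommGroup V] [Module ℂ V] [StarAddMonoid V] [StarModule ℂ V] (P : AOUPack A V)

lemma l_sum {ι : Type*} (a : A) (s : Finset ι) (f : ι → V) :
    P.l a (∑ i ∈ s, f i) = ∑ i ∈ s, P.l a (f i) :=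
  map_sum (AddMonoidHom.mk' (P.l a) (P.add_l a)) f s

lemma r_sum {ι : Type*} (b : A) (s : Finset ι) (f : ι → V) :
    P.r (∑ i ∈ s, f i) b = ∑ i ∈ s, P.r (f i) b :=
  map_sum (AddMonoidHom.mk' (P.r · b) (P.r_add · · b)) f s

lemma sum_l {ι : Type*} (x : V) (s : Finset ι) (f : ι → A) :
    P.l (∑ i ∈ s, f i) x = ∑ i ∈ s, P.l (f i) x :=
  map_sum (AddMonoidHom.mk' (P.l · x) (P.l_add · · x)) f s

lemma sum_r {ι : Type*} (x : V) (s : Finset ι) (f : ι → A) :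
    P.r x (∑ i ∈ s, f i) = ∑ i ∈ s, P.r x (f i) :=
  map_sum (AddMonoidHom.mk' (P.r x) (P.add_r x)) f s

lemma star_r (x : V) (a : A) : star (P.r x a) = P.l (star a) (star x) := by
  rw [← star_star (P.l _ _), P.star_l, star_star, star_star]

lemma r_one (x : V) : P.r x 1 = x :=
  star_injective (by rw [P.star_r, star_one, P.one_l])

lemma e_mem_pos : P.e ∈ P.pos := by
  obtain ⟨t, ht, hmem⟩ := P.e_orderUnit (-P.e) (by rw [star_neg, P.e_isSelfAdjoint])
  have hsum : (t : ℂ) • P.e - -P.e = ((t + 1 : ℝ) : ℂ) • P.e := by push_cast; module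
  have h := P.pos_smul_mem (t + 1)⁻¹ (by positivity) _ (hsum ▸ hmem)
  rwa [smul_smul, ← Complex.ofReal_mul, inv_mul_cancel₀ (by positivity), Complex.ofReal_one,
    one_smul] at h

lemma amul_mul {k m o n : ℕ} (M : Matrix (Fin k) (Fin m) A) (N : Matrix (Fin m) (Fin o) A)
    (X : Matrix (Fin o) (Fin n) V) : P.amul (M * N) X = P.amul M (P.amul N X) := by
  ext i j
  simp only [amul, of_apply, mul_apply, P.sum_l, P.mul_l, P.l_sum]
  exact Finset.sum_comm

lemma vmul_mul {m n o l : ℕ} (X : Matrix (Fin m) (Fin n) V) (M : Matrix (Fin n) (Fin o) A)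
    (N : Matrix (Fin o) (Fin l) A) : P.vmul X (M * N) = P.vmul (P.vmul X M) N := by
  ext i j
  simp only [vmul, of_apply, mul_apply, P.sum_r, P.mul_r, P.r_sum]
  exact Finset.sum_comm

lemma amul_vmul {k m n o : ℕ} (M : Matrix (Fin k) (Fin m) A) (X : Matrix (Fin m) (Fin n) V)
    (N : Matrix (Fin n) (Fin o) A) : P.amul M (P.vmul X N) = P.vmul (P.amul M X) N := by
  ext i j
  simp only [amul, vmul, of_apply, P.l_sum, P.r_sum, P.l_r_assoc]
  exact Finset.sum_comm

lemma conj_conj {m n o : ℕ} (M : Matrix (Fin m) (Fin n) A) (N : Matrix (Fin n) (Fin o) A)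
    (X : Matrix (Fin m) (Fin m) V) : P.conj N (P.conj M X) = P.conj (M * N) X := by
  rw [conj, conj, conj, conjTranspose_mul, P.amul_mul, P.amul_vmul, P.vmul_mul]

lemma conj_add {m n : ℕ} (M : Matrix (Fin m) (Fin n) A) (X Y : Matrix (Fin m) (Fin m) V) :
    P.conj M (X + Y) = P.conj M X + P.conj M Y := by
  ext i j
  simp only [conj, amul, vmul, of_apply, Matrix.add_apply, P.add_l, P.r_add, Finset.sum_add_distrib]

lemma conj_smul {m n : ℕ} (M : Matrix (Fin m) (Fin n) A) (c : ℂ)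
    (X : Matrix (Fin m) (Fin m) V) : P.conj M (c • X) = c • P.conj M X := by
  ext i j
  simp only [conj, amul, vmul, of_apply, Matrix.smul_apply, P.l_smul, ← Finset.smul_sum, P.smul_r]

lemma conj_sum {ι : Type*} {m n : ℕ} (M : Matrix (Fin m) (Fin n) A) (s : Finset ι)
    (f : ι → Matrix (Fin m) (Fin m) V) :
    P.conj M (∑ i ∈ s, f i) = ∑ i ∈ s, P.conj M (f i) :=
  map_sum (AddMonoidHom.mk' (P.conj M) (P.conj_add M)) f s

lemma conjTranspose_conj {m n : ℕ} (M : Matrix (Fin m) (Fin n) A)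
    (X : Matrix (Fin m) (Fin m) V) : (P.conj M X)ᴴ = P.conj M Xᴴ := by
  ext i j
  simp only [conjTranspose_apply, conj, vmul, amul, of_apply, star_sum, P.star_r, P.star_l,
    star_star, P.r_sum, P.l_r_assoc]
  exact Finset.sum_comm

lemma matE_conjTranspose (n : ℕ) : (P.matE n)ᴴ = P.matE n := by
  simp [matE, diagonal_conjTranspose, Pi.star_def, P.e_isSelfAdjoint]

lemma Dmax_zero (n : ℕ) : (0 : Matrix (Fin n) (Fin n) V) ∈ P.Dmax n :=
  ⟨0, Fin.elim0, Fin.elim0, Fin.rec0, by simp⟩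

lemma Dmax_add {n : ℕ} {X Y : Matrix (Fin n) (Fin n) V} (hX : X ∈ P.Dmax n)
    (hY : Y ∈ P.Dmax n) : X + Y ∈ P.Dmax n := by
  obtain ⟨k₁, x₁, a₁, hx₁, rfl⟩ := hX
  obtain ⟨k₂, x₂, a₂, hx₂, rfl⟩ := hY
  refine ⟨k₁ + k₂, Fin.append x₁ x₂, Fin.append a₁ a₂,
    Fin.addCases (by simpa using hx₁) (by simpa using hx₂), ?_⟩
  simp [Fin.sum_univ_add]

lemma Dmax_smul {n : ℕ} {t : ℝ} (ht : 0 ≤ t) {X : Matrix (Fin n) (Fin n) V}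
    (hX : X ∈ P.Dmax n) : (t : ℂ) • X ∈ P.Dmax n := by
  obtain ⟨k, x, a, hx, rfl⟩ := hX
  refine ⟨k, fun i => (t : ℂ) • x i, a, fun i => P.pos_smul_mem t ht _ (hx i), ?_⟩
  rw [Finset.smul_sum]
  refine Finset.sum_congr rfl fun i _ => ?_
  rw [← P.conj_smul]
  rfl

lemma Dmax_sum {ι : Type*} {n : ℕ} (s : Finset ι) {f : ι → Matrix (Fin n) (Fin n) V}
    (hf : ∀ i ∈ s, f i ∈ P.Dmax n) : ∑ i ∈ s, f i ∈ P.Dmax n :=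
  Finset.sum_induction f (· ∈ P.Dmax n) (fun _ _ => P.Dmax_add) (P.Dmax_zero n) hf

lemma Dmax_conj {m n : ℕ} (M : Matrix (Fin m) (Fin n) A) {X : Matrix (Fin m) (Fin m) V}
    (hX : X ∈ P.Dmax m) : P.conj M X ∈ P.Dmax n := by
  obtain ⟨k, x, a, hx, rfl⟩ := hX
  exact ⟨k, x, fun i => a i * M, hx, by simp only [P.conj_sum, P.conj_conj]⟩

lemma Dmax_conjTranspose {n : ℕ} {X : Matrix (Fin n) (Fin n) V} (hX : X ∈ P.Dmax n) :
    Xᴴ = X := by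
  obtain ⟨k, x, a, hx, rfl⟩ := hX
  rw [conjTranspose_sum]
  refine Finset.sum_congr rfl fun i _ => ?_
  rw [P.conjTranspose_conj]
  congr 1
  ext
  exact P.pos_isSelfAdjoint _ (hx i)

def DmaxBounded (n : ℕ) (X : Matrix (Fin n) (Fin n) V) : Prop :=
  ∃ t : ℝ, (t : ℂ) • P.matE n - X ∈ P.Dmax n

lemma dmaxBounded_add {n : ℕ} {X Y : Matrix (Fin n) (Fin n) V} (hX : P.DmaxBounded n X)
    (hY : P.DmaxBounded n Y) : P.DmaxBounded n (X + Y) := by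
  obtain ⟨s, hs⟩ := hX
  obtain ⟨t, ht⟩ := hY
  refine ⟨s + t, ?_⟩
  convert P.Dmax_add hs ht using 1
  push_cast
  module

lemma dmaxBounded_smul {n : ℕ} {X : Matrix (Fin n) (Fin n) V} (hX : P.DmaxBounded n X)
    {t : ℝ} (ht : 0 ≤ t) : P.DmaxBounded n ((t : ℂ) • X) := by
  obtain ⟨s, hs⟩ := hX
  refine ⟨t * s, ?_⟩
  convert P.Dmax_smul ht hs using 1
  push_cast
  module

lemma dmaxBounded_sum {ι : Type*} {n : ℕ} (s : Finset ι) {f : ι → Matrix (Fin n) (Fin n) V}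
    (hf : ∀ i ∈ s, P.DmaxBounded n (f i)) : P.DmaxBounded n (∑ i ∈ s, f i) :=
  Finset.sum_induction f (P.DmaxBounded n) (fun _ _ => P.dmaxBounded_add)
    ⟨0, by simpa using P.Dmax_zero n⟩ hf

lemma Cmax_add {n : ℕ} {X Y : Matrix (Fin n) (Fin n) V} (hX : X ∈ P.Cmax n)
    (hY : Y ∈ P.Cmax n) : X + Y ∈ P.Cmax n := by
  intro t ht
  convert P.Dmax_add (hX (t / 2) (by linarith)) (hY (t / 2) (by linarith)) using 1
  push_cast
  module

lemma Cmax_conjTranspose {n : ℕ} {X : Matrix (Fin n) (Fin n) V} (hX : X ∈ P.Cmax n) :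
    Xᴴ = X := by
  have h := P.Dmax_conjTranspose (hX 1 one_pos)
  rwa [conjTranspose_add, conjTranspose_smul, P.matE_conjTranspose, Complex.star_def,
    Complex.conj_ofReal, add_left_inj] at h

lemma Cmax_arch {n : ℕ} {X : Matrix (Fin n) (Fin n) V}
    (hX : ∀ t : ℝ, 0 < t → X + (t : ℂ) • P.matE n ∈ P.Cmax n) : X ∈ P.Cmax n := by
  intro t ht
  convert hX (t / 2) (by linarith) (t / 2) (by linarith) using 1
  push_cast
  module

lemma Dmax_subset_of_isOperatorSystemStructure {Q : ∀ n : ℕ, Set (Matrix (Fin n) (Fin n) V)}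
    (hQ : P.IsOperatorSystemStructure Q) {n : ℕ} {X : Matrix (Fin n) (Fin n) V}
    (hX : X ∈ P.Dmax n) : X ∈ Q n := by
  obtain ⟨k, x, a, hx, rfl⟩ := hX
  obtain ⟨Y, hY⟩ := hQ.nonempty n
  refine Finset.sum_induction _ (· ∈ Q n) (fun _ _ hX hY => hQ.add_mem n _ hX _ hY)
    (by simpa using hQ.smul_mem n 0 le_rfl Y hY) fun i _ => ?_
  exact hQ.compat 1 n _ (a i) ((hQ.level_one _).mpr (hx i))

lemma Cmax_subset_of_isOperatorSystemStructure {Q : ∀ n : ℕ, Set (Matrix (Fin n) (Fin n) V)}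
    (hQ : P.IsOperatorSystemStructure Q) {n : ℕ} {X : Matrix (Fin n) (Fin n) V}
    (hX : X ∈ P.Cmax n) : X ∈ Q n :=
  hQ.arch n X fun t ht => P.Dmax_subset_of_isOperatorSystemStructure hQ (hX t ht)

end Bimodule

/-- The matrix `a* b ⊗ x`. -/
def rankOne {V : Type*} [SMul ℂ V] {n : ℕ} (a b : Fin n → ℂ) (x : V) :
    Matrix (Fin n) (Fin n) V :=
  of fun p q => (star (a p) * b q) • x

lemma add_conjTranspose_eq_sum_single {V : Type*} [AddCommMonoid V] [Star V] {n : ℕ}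
    (X : Matrix (Fin n) (Fin n) V) :
    X + Xᴴ = ∑ i, ∑ j, (single i j (X i j) + single j i (star (X i j))) := by
  ext p q
  simp [Matrix.sum_apply, single_apply, Finset.sum_add_distrib, ite_and]

section Scalar

variable {V : Type*} [AddCommGroup V] [Module ℂ V] {n : ℕ}

lemma rankOne_smul_sub (a b : Fin n → ℂ) (t : ℂ) (x y : V) :
    rankOne a b (t • x - y) = t • rankOne a b x - rankOne a b y := by
  ext p q
  simp only [rankOne, of_apply, Matrix.sub_apply, Matrix.smul_apply, smul_sub, smul_comm t]

lemma rankOne_single_single (i j : Fin n) (x : V) :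
    rankOne (Pi.single i 1) (Pi.single j 1) x = single i j x := by
  ext p q
  simp only [rankOne, Pi.single_apply, eq_comm, RCLike.star_def, MonoidWithZeroHom.map_ite_one_zero,
    mul_ite, mul_one, mul_zero, ite_smul, one_smul, zero_smul, of_apply, single_apply, ite_and]
  split_ifs <;> rfl

lemma sum_rankOne_lagrange (c : Fin n → ℂ) (x : V) :
    ∑ k, ∑ l, rankOne (Pi.single k (star (c l)) - Pi.single l (star (c k)))
        (Pi.single k (star (c l)) - Pi.single l (star (c k))) x
      = (2 : ℂ) • ((∑ k, star (c k) * c k) • (diagonal fun _ => x) - rankOne c c x) := by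
  ext p q
  simp only [rankOne, Matrix.sum_apply, of_apply, Matrix.smul_apply, Matrix.sub_apply,
    diagonal_apply, smul_ite, smul_zero, ← Finset.sum_smul]
  simp only [RCLike.star_def, Pi.sub_apply, Pi.single_apply, star_sub, apply_ite star,
    RingHomCompTriple.comp_apply, RingHom.id_apply, star_zero, mul_sub, mul_ite, sub_mul, ite_mul,
    mul_comm (c _), zero_mul, mul_zero, Finset.sum_sub_distrib, Finset.sum_ite_irrel,
    Finset.sum_const_zero, Finset.sum_ite_eq, Finset.mem_univ, ↓reduceIte]
  split_ifs <;> module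

lemma sum_rankOne_polarization [Star V] (a b : Fin n → ℂ) (v : V) :
    ∑ ω ∈ {1, -1, Complex.I, -Complex.I},
        rankOne (a + ω • b) (a + ω • b) (star ω • v + ω • star v)
      = (4 : ℂ) • (rankOne a b v + rankOne b a (star v)) := by
  rw [Finset.sum_insert (by norm_num [Complex.ext_iff]), Finset.sum_insert
    (by norm_num [Complex.ext_iff]), Finset.sum_pair (by norm_num [Complex.ext_iff])]
  ext p q
  simp only [rankOne, one_smul, Pi.add_apply, star_add, RCLike.star_def, star_one, smul_add,
    neg_smul, Pi.neg_apply, star_neg, smul_neg, Pi.smul_apply, smul_eq_mul, star_mul',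
    Complex.conj_I, neg_mul, neg_neg, of_add_of, Matrix.add_apply, of_apply, Matrix.smul_apply]
  match_scalars <;> ring_nf <;> simp only [Complex.I_sq] <;> ring

end Scalar

section StarModule

variable {A V : Type*} [Ring A] [StarRing A] [Algebra ℂ A] [StarModule ℂ A]
  [AddCommGroup V] [Module ℂ V] [StarAddMonoid V] [StarModule ℂ V] (P : AOUPack A V)

lemma conj_row_eq_rankOne {n : ℕ} (c : Fin n → ℂ) (x : V) :
    P.conj (of fun _ q => c q • (1 : A) : Matrix (Fin 1) (Fin n) A) (of fun _ _ => x)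
      = rankOne c c x := by
  ext p q
  simp only [conj, amul, vmul, rankOne, of_apply, conjTranspose_apply, Fin.sum_univ_one,
    star_smul, star_one, P.smul_l, P.one_l, P.r_smul, P.smul_r, P.r_one, smul_smul, mul_comm]

lemma rankOne_mem_Dmax {n : ℕ} (c : Fin n → ℂ) {x : V} (hx : x ∈ P.pos) :
    rankOne c c x ∈ P.Dmax n :=
  ⟨1, fun _ => x, fun _ => of fun _ q => c q • (1 : A), fun _ => hx,
    by rw [Fin.sum_univ_one, P.conj_row_eq_rankOne]⟩

lemma matE_mem_Dmax (n : ℕ) : P.matE n ∈ P.Dmax n := by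
  rw [matE, ← sum_single_eq_diagonal]
  exact P.Dmax_sum _ fun k _ => rankOne_single_single k k P.e ▸ P.rankOne_mem_Dmax _ P.e_mem_pos

lemma Dmax_subset_Cmax {n : ℕ} {X : Matrix (Fin n) (Fin n) V} (hX : X ∈ P.Dmax n) :
    X ∈ P.Cmax n :=
  fun _ ht => P.Dmax_add hX (P.Dmax_smul ht.le (P.matE_mem_Dmax n))

lemma normSq_smul_matE_sub_rankOne_mem_Dmax {n : ℕ} (c : Fin n → ℂ) :
    ((∑ k, Complex.normSq (c k) : ℝ) : ℂ) • P.matE n - rankOne c c P.e ∈ P.Dmax n := by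
  have h := P.Dmax_smul (t := 1 / 2) (by norm_num)
    (P.Dmax_sum Finset.univ fun k _ => P.Dmax_sum Finset.univ fun l _ =>
      P.rankOne_mem_Dmax (Pi.single k (star (c l)) - Pi.single l (star (c k))) P.e_mem_pos)
  rw [sum_rankOne_lagrange, smul_smul] at h
  convert h using 2
  · push_cast
    simp [Complex.normSq_eq_conj_mul_self, matE]

lemma dmaxBounded_rankOne {n : ℕ} (c : Fin n → ℂ) {y : V} (hy : star y = y) :
    P.DmaxBounded n (rankOne c c y) := by
  obtain ⟨r, hr, hry⟩ := P.e_orderUnit y hy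
  refine ⟨r * ∑ k, Complex.normSq (c k), ?_⟩
  convert P.Dmax_add (P.rankOne_mem_Dmax c hry)
    (P.Dmax_smul hr.le (P.normSq_smul_matE_sub_rankOne_mem_Dmax c)) using 1
  rw [rankOne_smul_sub]
  push_cast
  module

lemma dmaxBounded_single_add_single {n : ℕ} (i j : Fin n) (v : V) :
    P.DmaxBounded n (single i j v + single j i (star v)) := by
  have h := P.dmaxBounded_smul (t := 1 / 4) (P.dmaxBounded_sum {1, -1, Complex.I, -Complex.I}
    fun ω _ => P.dmaxBounded_rankOne (Pi.single i 1 + ω • Pi.single j 1)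
      (y := star ω • v + ω • star v)
      (by rw [star_add, star_smul, star_smul, star_star, star_star, add_comm])) (by norm_num)
  rwa [sum_rankOne_polarization, smul_smul, show ((1 / 4 : ℝ) : ℂ) * 4 = 1 by norm_num,
    one_smul, rankOne_single_single, rankOne_single_single] at h

lemma dmaxBounded_of_conjTranspose_eq {n : ℕ} {X : Matrix (Fin n) (Fin n) V} (hX : Xᴴ = X) :
    P.DmaxBounded n X := by
  have h := P.dmaxBounded_smul (t := 1 / 2) (P.dmaxBounded_sum Finset.univ fun i _ =>
    P.dmaxBounded_sum Finset.univ fun j _ => P.dmaxBounded_single_add_single i j (X i j))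
    (by norm_num)
  rw [← add_conjTranspose_eq_sum_single, hX] at h
  convert h using 1
  push_cast
  module

lemma exists_pos_smul_matE_sub_mem_Dmax {n : ℕ} {X : Matrix (Fin n) (Fin n) V} (hX : Xᴴ = X) :
    ∃ t : ℝ, 0 < t ∧ (t : ℂ) • P.matE n - X ∈ P.Dmax n := by
  obtain ⟨t, ht⟩ := P.dmaxBounded_of_conjTranspose_eq hX
  refine ⟨max t 1, by positivity, ?_⟩
  convert P.Dmax_add ht (P.Dmax_smul (sub_nonneg.mpr (le_max_left t 1)) (P.matE_mem_Dmax n))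
    using 1
  push_cast
  module

lemma Cmax_smul {n : ℕ} {s : ℝ} (hs : 0 ≤ s) {X : Matrix (Fin n) (Fin n) V}
    (hX : X ∈ P.Cmax n) : (s : ℂ) • X ∈ P.Cmax n := by
  rcases hs.eq_or_lt with rfl | hs
  · simpa using P.Dmax_subset_Cmax (P.Dmax_zero n)
  intro t ht
  convert P.Dmax_smul hs.le (hX (t / s) (div_pos ht hs)) using 1
  have hs' : (s : ℂ) ≠ 0 := by exact_mod_cast hs.ne'
  rw [smul_add, smul_smul, Complex.ofReal_div, mul_div_cancel₀ _ hs']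

lemma Cmax_conj {m n : ℕ} (M : Matrix (Fin m) (Fin n) A) {X : Matrix (Fin m) (Fin m) V}
    (hX : X ∈ P.Cmax m) : P.conj M X ∈ P.Cmax n := by
  intro s hs
  obtain ⟨c, hc, hcM⟩ := P.exists_pos_smul_matE_sub_mem_Dmax (X := P.conj M (P.matE m))
    (by rw [P.conjTranspose_conj, P.matE_conjTranspose])
  have hsc : 0 < s / c := div_pos hs hc
  convert P.Dmax_add (P.Dmax_conj M (hX (s / c) hsc)) (P.Dmax_smul hsc.le hcM) using 1
  have hc' : (c : ℂ) ≠ 0 := by exact_mod_cast hc.ne'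
  rw [P.conj_add, P.conj_smul, smul_sub, smul_smul, Complex.ofReal_div, div_mul_cancel₀ _ hc']
  abel

lemma isOperatorSystemStructure_Cmax {Q : ∀ n : ℕ, Set (Matrix (Fin n) (Fin n) V)}
    (hQ : P.IsOperatorSystemStructure Q) : P.IsOperatorSystemStructure P.Cmax where
  herm _ _ := P.Cmax_conjTranspose
  add_mem _ _ hX _ hY := P.Cmax_add hX hY
  smul_mem _ _ ht _ hX := P.Cmax_smul ht hX
  nonempty n := ⟨0, P.Dmax_subset_Cmax (P.Dmax_zero n)⟩
  salient n X hX hX' := hQ.salient n X (P.Cmax_subset_of_isOperatorSystemStructure hQ hX)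
    (P.Cmax_subset_of_isOperatorSystemStructure hQ hX')
  compat _ _ _ M hX := P.Cmax_conj M hX
  level_one X := by
    refine ⟨fun hX => (hQ.level_one X).mp (P.Cmax_subset_of_isOperatorSystemStructure hQ hX),
      fun hX => P.Dmax_subset_Cmax ?_⟩
    convert P.rankOne_mem_Dmax 1 hX
    ext p q
    simp [rankOne, Subsingleton.elim p 0, Subsingleton.elim q 0]
  orderUnit _ _ hX := by
    obtain ⟨t, ht, hmem⟩ := P.exists_pos_smul_matE_sub_mem_Dmax hX
    exact ⟨t, ht, P.Dmax_subset_Cmax hmem⟩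
  arch _ _ := P.Cmax_arch

end StarModule

end AOUPack

universe u

/-- Theorem 3.9 (ii): if every positive `𝒜`-bimodule map from `(V, (Q_n), e)` into any
operator `𝒜`-system is completely positive, then `(Q_n)` is the maximal operator
`𝒜`-system structure (the identity is a unital `𝒜`-bimodule complete order
isomorphism onto `omax_𝒜(V)`). -/
theorem eq_cmax_of_univ_property
    {A : Type*} [CStarAlgebra A]
    {V : Type u} [AddCommGroup V] [Module ℂ V] [StarAddMonoid V] [StarModule ℂ V]
    (P : AOUPack A V) (Q : ∀ n : ℕ, Set (Matrix (Fin n) (Fin n) V))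
    (hQ : P.IsOperatorSystemStructure Q)
    (huniv : ∀ (S : Type u) [AddCommGroup S] [Module ℂ S] [StarAddMonoid S]
      [StarModule ℂ S] (PS : AOUPack A S)
      (QS : ∀ n : ℕ, Set (Matrix (Fin n) (Fin n) S)),
      PS.IsOperatorSystemStructure QS →
      ∀ φ : V →ₗ[ℂ] S,
        (∀ (a : A) (x : V), φ (P.l a x) = PS.l a (φ x)) →
        (∀ (x : V) (a : A), φ (P.r x a) = PS.r (φ x) a) →
        (∀ x ∈ P.pos, φ x ∈ PS.pos) →
        ∀ n : ℕ, ∀ X ∈ Q n, X.map φ ∈ QS n) :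
    ∀ n : ℕ, Q n = P.Cmax n := by
  intro n
  refine Set.Subset.antisymm (fun X hX => ?_)
    fun X => P.Cmax_subset_of_isOperatorSystemStructure hQ
  simpa using huniv V P P.Cmax (P.isOperatorSystemStructure_Cmax hQ) LinearMap.id
    (fun _ _ => rfl) (fun _ _ => rfl) (fun _ => id) n X hX
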